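/- arXiv:2211.08374 — 6 statements merged into one kernel-verified Lean document; each statement's English description precedes it below -/
import Mathlib

section
/- Let n be a positive integer and consider the sequence a_0 = a, a_{j+1} = n mod a_j. For any real A ≥ 1, the number of indices j with A < a_j ≤ 2A is at most n/(2A) + 2. -/
/-- The iteration `a_0 = a`, `a_{j+1} = n mod a_j`. -/
def pseq (n a : ℕ) : ℕ → ℕ
  | 0 => a
  | j + 1 => n % pseq n a j

lemma quot_lt (n a : ℕ) (ha : 0 < a) (h : 0 < n % a) : n / a < n / (n % a) := by
  have hr : n % a < a := Nat.mod_lt n ha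
  have hd := Nat.div_add_mod n a
  have hm : (n / a) * (n % a) ≤ (n / a) * a := Nat.mul_le_mul_left _ hr.le
  have : (n / a + 1) * (n % a) ≤ n := by nlinarith
  have := (Nat.le_div_iff_mul_le h).2 this
  omega

lemma quot_mono (n a : ℕ) : ∀ j, ∀ i < j, (∀ k ≤ j, 0 < pseq n a k) →
    n / pseq n a i < n / pseq n a j := by
  intro j
  induction j with
  | zero => intro i hi; omega
  | succ m ih =>
    intro i hi hpos
    have hstep : n / pseq n a m < n / pseq n a (m+1) := by
      have h1 : 0 < pseq n a m := hpos m (by omega)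
      have h2 : 0 < n % pseq n a m := by
        have := hpos (m+1) le_rfl
        simpa [pseq] using this
      simpa [pseq] using quot_lt n (pseq n a m) h1 h2
    rcases Nat.lt_succ_iff_lt_or_eq.1 hi with h | h
    · exact lt_trans (ih i h (fun k hk => hpos k (by omega))) hstep
    · subst h; exact hstep

open Classical in
theorem stmt_2 (n a : ℕ) (hn : 0 < n) (ha : 0 < a) (han : a ≤ n) (A : ℝ) (hA : 1 ≤ A) :
    (((Finset.range (n + 1)).filter (fun j =>
        (∀ i ≤ j, 0 < pseq n a i) ∧ A < (pseq n a j : ℝ) ∧ (pseq n a j : ℝ) ≤ 2 * A)).card : ℝ)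
      ≤ n / (2 * A) + 2 := by
  set S := (Finset.range (n + 1)).filter (fun j =>
        (∀ i ≤ j, 0 < pseq n a i) ∧ A < (pseq n a j : ℝ) ∧ (pseq n a j : ℝ) ≤ 2 * A) with hS
  have hApos : (0:ℝ) < A := lt_of_lt_of_le one_pos hA
  set b1 : ℕ := Nat.floor A + 1 with hb1
  set b2 : ℕ := Nat.floor (2*A) with hb2
  have hb2pos : 0 < b2 := by
    have : (1:ℝ) ≤ 2*A := by linarith
    exact Nat.floor_pos.2 this
  set lo : ℕ := n / b2 with hlo
  set hi : ℕ := n / b1 with hhi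
  -- the quotient map sends S injectively into Icc lo hi
  have hmaps : ∀ j ∈ S, n / pseq n a j ∈ Finset.Icc lo hi := by
    intro j hj
    simp only [hS, Finset.mem_filter] at hj
    obtain ⟨-, hpos, hlow, hup⟩ := hj
    have hposj : 0 < pseq n a j := hpos j le_rfl
    have h1 : b1 ≤ pseq n a j := Nat.succ_le_of_lt ((Nat.floor_lt hApos.le).2 hlow)
    have h2 : pseq n a j ≤ b2 := Nat.le_floor hup
    exact Finset.mem_Icc.2 ⟨Nat.div_le_div_left h2 hposj, Nat.div_le_div_left h1 (by omega)⟩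
  have hinj : Set.InjOn (fun j => n / pseq n a j) S := by
    intro j hj k hk hjk
    simp only [hS, Finset.mem_filter, Finset.coe_filter] at hj hk
    by_contra hne
    rcases Nat.lt_or_ge j k with h | h
    · exact absurd hjk (ne_of_lt (quot_mono n a k j h hk.2.1))
    · have h' : k < j := by omega
      exact absurd hjk.symm (ne_of_lt (quot_mono n a j k h' hj.2.1))
  have hcard : S.card ≤ (Finset.Icc lo hi).card :=
    Finset.card_le_card_of_injOn _ hmaps hinj
  rcases Nat.lt_or_ge hi lo with h | h
  · have : (Finset.Icc lo hi).card = 0 := by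
      simp [Finset.Icc_eq_empty_of_lt h]
    have hz : S.card = 0 := by omega
    rw [hz]
    have : (0:ℝ) ≤ (n:ℝ) / (2*A) := by positivity
    push_cast; linarith
  · have hc : (Finset.Icc lo hi).card = hi + 1 - lo := Nat.card_Icc lo hi
    have hcr : (S.card : ℝ) ≤ (hi:ℝ) + 1 - lo := by
      have : S.card ≤ hi + 1 - lo := by omega
      have := (Nat.cast_le (α := ℝ)).2 this
      rw [Nat.cast_sub (by omega)] at this
      push_cast at this ⊢
      linarith
    -- bound hi from above by n/A
    have hhiR : (hi:ℝ) ≤ (n:ℝ) / A := by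
      have h1 : (hi:ℝ) ≤ (n:ℝ) / b1 := Nat.cast_div_le
      have hb1A : A ≤ (b1:ℝ) := by
        have := Nat.lt_floor_add_one A
        push_cast [hb1]
        linarith
      have : (n:ℝ) / b1 ≤ (n:ℝ) / A :=
        div_le_div_of_nonneg_left (by positivity) hApos hb1A
      linarith
    -- bound lo from below by n/(2A) - 1
    have hloR : (n:ℝ) / (2*A) - 1 < (lo:ℝ) := by
      have h1 : n < (lo + 1) * b2 := by
        have h1' := Nat.div_add_mod n b2
        have h2' := Nat.mod_lt n hb2pos
        simp only [hlo]
        nlinarith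
      have h1R : (n:ℝ) < ((lo:ℝ) + 1) * b2 := by exact_mod_cast h1
      have hb2R : (b2:ℝ) ≤ 2*A := Nat.floor_le (by positivity)
      have hb2Rpos : (0:ℝ) < b2 := by exact_mod_cast hb2pos
      have hle : (n:ℝ) / (2*A) ≤ (n:ℝ) / b2 :=
        div_le_div_of_nonneg_left (by positivity) hb2Rpos hb2R
      have hlt : (n:ℝ) / b2 < (lo:ℝ) + 1 := by
        rw [div_lt_iff₀ hb2Rpos]; linarith
      linarith
    have hsplit : (n:ℝ) / A = (n:ℝ)/(2*A) + (n:ℝ)/(2*A) := by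
      field_simp; ring
    linarith
end

section
/- There exists a constant C > 0 such that for all positive integers n, P(n) ≤ C·√n, where P(n) = max_{1 ≤ a ≤ n} P(a,n). -/
/-- `P(a,n)`: the least `k ≥ 1` with `a_k = 0`. -/
noncomputable def Psteps (n a : ℕ) : ℕ := sInf {k | 0 < k ∧ pseq n a k = 0}


/-- `P(n) = max_{1 ≤ a ≤ n} P(a,n)`. -/
noncomputable def Pmax (n : ℕ) : ℕ := (Finset.Icc 1 n).sup (fun a => Psteps n a)

lemma key_div (n b : ℕ) (hr : 0 < n % b) : n / b < n / (n % b) := by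
  rcases Nat.eq_zero_or_pos b with hb | hb
  · subst hb
    simp only [Nat.div_zero, Nat.mod_zero] at *
    rw [Nat.div_self hr]
    norm_num
  · have hlt : n % b < b := Nat.mod_lt _ hb
    have h1 : (n / b + 1) * (n % b) ≤ n := by
      have h2 := Nat.div_add_mod n b
      have h5 : n / b * (n % b) ≤ n / b * b := Nat.mul_le_mul_left _ (le_of_lt hlt)
      nlinarith
    have h3 := (Nat.le_div_iff_mul_le hr).mpr h1
    omega

lemma quot_grow (n a : ℕ) : ∀ j, (∀ i, i ≤ j → 0 < pseq n a i) →
    n / a + j ≤ n / pseq n a j := by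
  intro j
  induction j with
  | zero => intro _; simp [pseq]
  | succ j ih =>
    intro h
    have h1 := ih (fun i hi => h i (le_trans hi (Nat.le_succ j)))
    have h2 : 0 < pseq n a (j + 1) := h _ le_rfl
    have h3 : pseq n a (j + 1) = n % pseq n a j := rfl
    have h4 := key_div n (pseq n a j) (h3 ▸ h2)
    rw [h3]
    omega

lemma zero_within (n a : ℕ) : ∀ m j, pseq n a j ≤ m → ∃ k, k ≤ j + m ∧ pseq n a k = 0 := by
  intro m
  induction m with
  | zero => intro j h; exact ⟨j, by omega, Nat.le_zero.mp h⟩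
  | succ m ih =>
    intro j h
    rcases Nat.eq_zero_or_pos (pseq n a j) with h0 | h0
    · exact ⟨j, by omega, h0⟩
    · have hlt : pseq n a (j + 1) < pseq n a j := Nat.mod_lt _ h0
      obtain ⟨k, hk, hk0⟩ := ih (j + 1) (by omega)
      exact ⟨k, by omega, hk0⟩

lemma Psteps_bound (n a : ℕ) (ha : 1 ≤ a) (han : a ≤ n) :
    Psteps n a ≤ 2 * Nat.sqrt n := by
  set s := Nat.sqrt n with hs
  have hA : ∃ j, j ≤ s ∧ pseq n a j ≤ s := by
    by_contra hc
    push_neg at hc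
    have hpos : ∀ i, i ≤ s → 0 < pseq n a i := fun i hi => lt_of_le_of_lt (Nat.zero_le s) (hc i hi)
    have hg := quot_grow n a s hpos
    have h5 : s + 1 ≤ pseq n a s := hc s le_rfl
    have h6 : n / pseq n a s ≤ n / (s + 1) := Nat.div_le_div_left h5 (Nat.succ_pos s)
    have h7 : n < (s + 1) * (s + 1) := Nat.lt_succ_sqrt n
    have h8 : n / (s + 1) < s + 1 := (Nat.div_lt_iff_lt_mul (Nat.succ_pos s)).mpr h7
    have h9 : 1 ≤ n / a := (Nat.one_le_div_iff (lt_of_lt_of_le Nat.one_pos ha)).mpr han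
    omega
  obtain ⟨j, hj, hjs⟩ := hA
  obtain ⟨k, hk, hk0⟩ := zero_within n a s j hjs
  have hkpos : 0 < k := by
    rcases Nat.eq_zero_or_pos k with h | h
    · subst h; simp [pseq] at hk0; omega
    · exact h
  have hle : Psteps n a ≤ k := Nat.sInf_le ⟨hkpos, hk0⟩
  omega

theorem stmt_5 : ∃ C > 0, ∀ n : ℕ, 0 < n → (Pmax n : ℝ) ≤ C * Real.sqrt n := by
  refine ⟨2, by norm_num, fun n hn => ?_⟩
  have h1 : Pmax n ≤ 2 * Nat.sqrt n := by
    apply Finset.sup_le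
    intro a ha
    rw [Finset.mem_Icc] at ha
    exact Psteps_bound n a ha.1 ha.2
  have h2 : (Nat.sqrt n : ℝ) ≤ Real.sqrt n := Real.nat_sqrt_le_real_sqrt
  calc (Pmax n : ℝ) ≤ 2 * (Nat.sqrt n : ℝ) := by exact_mod_cast h1
    _ ≤ 2 * Real.sqrt n := by linarith
end

section
/- There is a constant c > 0 such that for all sufficiently large n and every positive integer k ≤ c·(log n)/(log log n), one has (-1)^k · k! · (Σ_{j=0}^{k} (-1)^j/j! − 1/e) · n > n/(k+2) + k!. -/
open Real Finset

noncomputable def Ek (k : ℕ) : ℝ :=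
  (-1 : ℝ) ^ k * (Nat.factorial k) *
    ((∑ j ∈ Finset.range (k + 1), (-1 : ℝ) ^ j / (Nat.factorial j)) - Real.exp (-1))

lemma absEk (k : ℕ) : |Ek k| ≤ ((k:ℝ)+2)/((k:ℝ)+1)^2 := by
  have h := Real.exp_bound (x := -1) (by norm_num) (n := k+1) (by omega)
  simp only [abs_neg, abs_one, one_pow, one_mul] at h
  have hsum : ∀ m ∈ Finset.range (k+1), ((-1:ℝ))^m / (m.factorial:ℝ) = (-1)^m / (m.factorial:ℝ) := fun _ _ => rfl
  have habs : |Ek k| = (k.factorial : ℝ) *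
      |(∑ j ∈ Finset.range (k + 1), (-1 : ℝ) ^ j / (Nat.factorial j)) - Real.exp (-1)| := by
    rw [Ek, abs_mul, abs_mul, abs_pow, abs_neg, abs_one, one_pow, one_mul,
      Nat.abs_cast]
  rw [abs_sub_comm] at h
  have h2 : |(∑ j ∈ Finset.range (k + 1), (-1 : ℝ) ^ j / (Nat.factorial j)) - Real.exp (-1)|
      ≤ ((k+1).succ : ℝ) / ((k+1).factorial * ((k+1:ℕ):ℝ)) := h
  rw [habs]
  have hfpos : (0:ℝ) < (k.factorial : ℝ) := by exact_mod_cast k.factorial_pos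
  have hfac : ((k+1).factorial : ℝ) = ((k:ℝ)+1) * (k.factorial : ℝ) := by
    push_cast [Nat.factorial_succ]; ring
  calc (k.factorial : ℝ) * |(∑ j ∈ Finset.range (k + 1), (-1 : ℝ) ^ j / (Nat.factorial j)) - Real.exp (-1)|
      ≤ (k.factorial : ℝ) * (((k+1).succ : ℝ) / ((k+1).factorial * ((k+1:ℕ):ℝ))) := by
        exact mul_le_mul_of_nonneg_left h2 hfpos.le
    _ = ((k:ℝ)+2)/((k:ℝ)+1)^2 := by
        rw [hfac]; push_cast; field_simp; ring

lemma recEk (k : ℕ) : Ek (k+2) = ((k:ℝ)+1)*((k:ℝ)+2)*Ek k - ((k:ℝ)+1) := by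
  have h1 : Finset.range (k+2+1) = Finset.range (k+1+1+1) := rfl
  rw [Ek, Ek, h1, Finset.sum_range_succ, Finset.sum_range_succ]
  have hf1 : ((k+1).factorial : ℝ) = ((k:ℝ)+1) * (k.factorial : ℝ) := by
    push_cast [Nat.factorial_succ]; ring
  have hf2 : ((k+2).factorial : ℝ) = ((k:ℝ)+2) * ((k:ℝ)+1) * (k.factorial : ℝ) := by
    push_cast [Nat.factorial_succ]; ring
  have hfpos : (0:ℝ) < (k.factorial : ℝ) := by exact_mod_cast k.factorial_pos
  rcases Nat.even_or_odd k with hk | hk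
  · rw [hk.neg_one_pow]
    have h2 : ((-1:ℝ))^(k+1) = -1 := by
      rw [pow_succ, hk.neg_one_pow]; ring
    have h3 : ((-1:ℝ))^(k+2) = 1 := by
      rw [pow_succ, h2]; ring
    rw [h2, h3, hf1, hf2]
    field_simp
    ring
  · rw [hk.neg_one_pow]
    have h2 : ((-1:ℝ))^(k+1) = 1 := by
      rw [pow_succ, hk.neg_one_pow]; ring
    have h3 : ((-1:ℝ))^(k+2) = -1 := by
      rw [pow_succ, h2]; ring
    rw [h2, h3, hf1, hf2]
    field_simp
    ring

lemma lowEk (k : ℕ) : (k:ℝ)/(((k:ℝ)+1)*((k:ℝ)+2)) ≤ Ek k := by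
  have hrec := recEk k
  have habs := absEk (k+2)
  push_cast at habs
  have h1 : |Ek (k+2)| ≤ 1 := by
    refine habs.trans ?_
    rw [div_le_one (by positivity)]
    nlinarith [sq_nonneg ((k:ℝ)+3)]
  have h2 : -1 ≤ Ek (k+2) := by
    have := abs_le.mp h1
    linarith [this.1]
  have hpos : (0:ℝ) < ((k:ℝ)+1)*((k:ℝ)+2) := by positivity
  rw [div_le_iff₀ hpos]
  nlinarith

theorem stmt_6 : ∃ c > (0:ℝ), ∃ N : ℕ, ∀ n : ℕ, N ≤ n → ∀ k : ℕ, 1 ≤ k →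
    (k : ℝ) ≤ c * Real.log n / Real.log (Real.log n) →
    (-1 : ℝ) ^ k * (Nat.factorial k) *
        ((∑ j ∈ Finset.range (k + 1), (-1 : ℝ) ^ j / (Nat.factorial j)) - Real.exp (-1)) * n
      > (n : ℝ) / (k + 2) + (Nat.factorial k) := by
  refine ⟨1/4, by norm_num, ⌈Real.exp 1024⌉₊ + 1, ?_⟩
  intro n hn k hk hkle
  have hEdef : (-1 : ℝ) ^ k * (Nat.factorial k) *
      ((∑ j ∈ Finset.range (k + 1), (-1 : ℝ) ^ j / (Nat.factorial j)) - Real.exp (-1)) = Ek k :=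
    rfl
  rw [hEdef]
  set L := Real.log n with hLdef
  set LL := Real.log L with hLLdef
  have hne : Real.exp 1024 ≤ (n:ℝ) := by
    calc Real.exp 1024 ≤ (⌈Real.exp 1024⌉₊ : ℝ) := Nat.le_ceil _
      _ ≤ n := by exact_mod_cast Nat.le_of_succ_le hn
  have hnpos : (0:ℝ) < n := lt_of_lt_of_le (Real.exp_pos _) hne
  have hL : (1024:ℝ) ≤ L := by
    have := Real.log_le_log (Real.exp_pos 1024) hne
    rwa [Real.log_exp] at this
  have hLpos : (0:ℝ) < L := by linarith
  -- LL ≥ 4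
  have hexp4 : Real.exp 4 ≤ 1024 := by
    have h1 : Real.exp 1 ≤ 2.7182818286 := Real.exp_one_lt_d9.le
    have h4 : Real.exp 4 = (Real.exp 1)^4 := by
      rw [← Real.exp_nat_mul]; norm_num
    have hp : (Real.exp 1)^4 ≤ 2.7182818286^4 :=
      pow_le_pow_left₀ (Real.exp_pos 1).le h1 4
    rw [h4]
    refine hp.trans (by norm_num)
  have hLL4 : (4:ℝ) ≤ LL := by
    rw [hLLdef, Real.le_log_iff_exp_le hLpos]
    linarith
  have hLLpos : (0:ℝ) < LL := by linarith
  -- LL ≤ L/16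
  have hLL16 : LL ≤ L/16 := by
    have h32 : L/32 + 1 ≤ Real.exp (L/32) := Real.add_one_le_exp _
    have hsq : Real.exp (L/16) = Real.exp (L/32) * Real.exp (L/32) := by
      rw [← Real.exp_add]; ring_nf
    have hLle : L ≤ Real.exp (L/16) := by
      nlinarith [Real.exp_pos (L/32)]
    have := Real.log_le_log hLpos hLle
    rwa [Real.log_exp] at this
  -- k * LL ≤ L/4
  have hkLL : (k:ℝ) * LL ≤ L/4 := by
    have := (le_div_iff₀ hLLpos).mp hkle
    linarith
  have hk16 : (k:ℝ) ≤ L/16 := by nlinarith [show (0:ℝ) ≤ (k:ℝ) from Nat.cast_nonneg k]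
  have hk4LL : ((k:ℝ)+4) * LL ≤ L/2 := by nlinarith
  have hkL : (k:ℝ) + 4 ≤ L := by linarith
  have hlogk : Real.log ((k:ℝ)+4) ≤ LL := by
    exact Real.log_le_log (by positivity) hkL
  -- (k+4)^(k+4) ≤ n
  have hpow : (((k:ℝ)+4))^(k+4) ≤ (n:ℝ) := by
    have h1 : (((k:ℝ)+4))^(k+4) = Real.exp (((k+4:ℕ):ℝ) * Real.log ((k:ℝ)+4)) := by
      rw [Real.exp_nat_mul, Real.exp_log (by positivity)]
    rw [h1]
    have h2 : ((k+4:ℕ):ℝ) * Real.log ((k:ℝ)+4) ≤ L := by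
      push_cast
      have hk0 : (0:ℝ) ≤ (k:ℝ) := Nat.cast_nonneg k
      have hlognn : 0 ≤ Real.log ((k:ℝ)+4) := Real.log_nonneg (by linarith)
      nlinarith
    calc Real.exp (((k+4:ℕ):ℝ) * Real.log ((k:ℝ)+4)) ≤ Real.exp L :=
          Real.exp_le_exp.mpr h2
      _ = n := Real.exp_log hnpos
  have hfactn : (((k+4).factorial : ℝ)) ≤ (n:ℝ) := by
    refine le_trans ?_ hpow
    have := Nat.factorial_le_pow (k+4)
    calc (((k+4).factorial : ℝ)) ≤ ((k+4:ℕ):ℝ)^(k+4) := by exact_mod_cast this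
      _ = (((k:ℝ)+4))^(k+4) := by push_cast; ring
  clear hpow hn hne hkle hkLL hk16 hk4LL hkL hlogk hL hLpos hexp4 hLL4 hLLpos hLL16 hLdef hLLdef
  clear_value L LL
  clear L LL
  -- final inequality
  have hrec := recEk k
  have hlow := lowEk (k+2)
  push_cast at hlow
  set K := (k:ℝ) with hKdef
  have hK1 : (1:ℝ) ≤ K := by rw [hKdef]; exact_mod_cast hk
  have hfpos : (0:ℝ) < (k.factorial : ℝ) := by exact_mod_cast k.factorial_pos
  have hfexp : ((k+4).factorial : ℝ) = (k.factorial : ℝ) * (K+1) * (K+2) * (K+3) * (K+4) := by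
    push_cast [show k+4 = k+1+1+1+1 from rfl, Nat.factorial_succ]
    ring
  have h2 : (K+2)/((K+3)*(K+4)) ≤ Ek (k+2) := by
    convert hlow using 2 <;> ring
  have h2' : (K+2) ≤ Ek (k+2) * ((K+3)*(K+4)) := by
    rw [div_le_iff₀ (by positivity)] at h2
    linarith
  have key : ((K+2) + (K+1)*(K+3)*(K+4)) ≤ Ek k * ((K+1)*(K+2)*(K+3)*(K+4)) := by
    have e1 : Ek k * ((K+1)*(K+2)*(K+3)*(K+4)) = (Ek (k+2) + (K+1)) * ((K+3)*(K+4)) := by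
      linear_combination (-((K+3)*(K+4))) * hrec
    rw [e1]
    have e2 : (Ek (k+2) + (K+1)) * ((K+3)*(K+4))
        = Ek (k+2) * ((K+3)*(K+4)) + (K+1)*((K+3)*(K+4)) := by ring
    rw [e2]
    nlinarith [h2']
  have hP : (0:ℝ) < (K+1)*(K+2)*(K+3)*(K+4) := by positivity
  have hEklow : 1/(K+2) + 1/((K+1)*(K+3)*(K+4)) ≤ Ek k := by
    have heq : 1/(K+2) + 1/((K+1)*(K+3)*(K+4))
        = ((K+2) + (K+1)*(K+3)*(K+4))/((K+1)*(K+2)*(K+3)*(K+4)) := by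
      field_simp
      ring
    rw [heq, div_le_iff₀ hP]
    linarith [key]
  have h6 : (k.factorial : ℝ) < (n:ℝ) / ((K+1)*(K+3)*(K+4)) := by
    rw [lt_div_iff₀ (by positivity)]
    have hgap : (0:ℝ) < (k.factorial:ℝ)*(K+1)*(K+1)*(K+3)*(K+4) := by positivity
    linarith [hfactn, hfexp, hgap]
  have hmul := mul_le_mul_of_nonneg_right hEklow hnpos.le
  have hsplit : (1/(K+2) + 1/((K+1)*(K+3)*(K+4))) * n = n/(K+2) + n/((K+1)*(K+3)*(K+4)) := by
    ring
  rw [hsplit] at hmul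
  linarith [h6, hmul]
end

section
/- There exists a constant c > 0 such that for all sufficiently large n, P(n) ≥ c·(log n)/(log log n), where P(n) = max_{1 ≤ a ≤ n} P(a,n) and P(a,n) is the number of iterations of x ↦ n mod x starting at a needed to reach 0. -/
/-!
Write `u_j = orbitRatio K j`, so that `u_{j+1} = 1 - (j+1) u_j` and `1/(j+2) ≤ u_j ≤ 1/(j+1)`
for `j < K`. Start the orbit at `a_0 = ⌈n u_0⌉`. As long as `n / a_j = j + 1`, the orbit obeys
the same recursion `a_{j+1} = n - (j+1) a_j`, so the error `a_j - n u_j` gets multiplied by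
`-(j+1)` and stays below `j!` in absolute value. For `n ≥ (K+1)!` this error is too small to
push `a_j` out of `(n/(j+2), n/(j+1)]`, so the orbit survives `K - 2` steps.
Finally `K = ⌊log n / (2 log log n)⌋` satisfies `(K+1)! ≤ (K+1)^(K+1) ≤ n`.
-/

open Real Filter
open scoped Nat

lemma pseq_succ_eq_pseq_mod (n a k : ℕ) : pseq n a (k + 1) = pseq n (n % a) k := by
  induction k with
  | zero => rfl
  | succ k ih => simp only [pseq] at ih ⊢; rw [ih]

lemma exists_pseq_eq_zero (n : ℕ) {a : ℕ} (ha : 0 < a) : ∃ k, 0 < k ∧ pseq n a k = 0 := by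
  induction a using Nat.strong_induction_on with
  | _ a ih =>
    rcases Nat.eq_zero_or_pos (n % a) with h | h
    · exact ⟨1, Nat.one_pos, h⟩
    · obtain ⟨k, -, hk⟩ := ih (n % a) (Nat.mod_lt n ha) h
      exact ⟨k + 1, k.succ_pos, by rwa [pseq_succ_eq_pseq_mod]⟩

lemma le_Psteps {n a m : ℕ} (h : ∀ j < m, pseq n a j ≠ 0) : m ≤ Psteps n a := by
  rcases Nat.eq_zero_or_pos m with rfl | hm
  · exact Nat.zero_le _
  obtain ⟨k, hk⟩ := exists_pseq_eq_zero n (Nat.pos_of_ne_zero (h 0 hm))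
  exact le_csInf ⟨k, hk⟩ fun k hk => not_lt.1 fun hkm => h k hkm hk.2

/-- `orbitRatio K j = j! ∑_{i=j+1}^{K} (-1)^(i-j-1) / i!`;
in particular `orbitRatio K 0 → 1 - 1/e`. -/
def orbitRatio (K j : ℕ) : ℚ := if j < K then (1 - orbitRatio K (j + 1)) / (j + 1) else 0
termination_by K - j

lemma orbitRatio_of_lt {K j : ℕ} (h : j < K) :
    orbitRatio K j = (1 - orbitRatio K (j + 1)) / (j + 1) := by
  rw [orbitRatio, if_pos h]

lemma orbitRatio_of_le {K j : ℕ} (h : K ≤ j) : orbitRatio K j = 0 := by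
  rw [orbitRatio, if_neg (not_lt.2 h)]

lemma orbitRatio_mem_Icc (K j : ℕ) : orbitRatio K j ∈ Set.Icc (0 : ℚ) (1 / (j + 1)) := by
  induction h : K - j generalizing j with
  | zero =>
    rw [orbitRatio_of_le (by omega)]
    exact ⟨le_rfl, by positivity⟩
  | succ d ih =>
    obtain ⟨h₀, h₁⟩ := ih (j + 1) (by omega)
    have hle : orbitRatio K (j + 1) ≤ 1 := h₁.trans (by push_cast; bound)
    rw [orbitRatio_of_lt (by omega : j < K)]
    exact ⟨by bound, by gcongr; linarith⟩

lemma add_one_mul_orbitRatio {K j : ℕ} (h : j < K) :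
    (j + 1) * orbitRatio K j = 1 - orbitRatio K (j + 1) := by
  rw [orbitRatio_of_lt h]; field_simp

lemma one_le_add_two_mul_orbitRatio {K j : ℕ} (h : j < K) : 1 ≤ (j + 2) * orbitRatio K j := by
  have hle := (orbitRatio_mem_Icc K (j + 1)).2
  rw [le_div_iff₀ (by positivity)] at hle
  have hrec := add_one_mul_orbitRatio h
  push_cast at hle
  nlinarith

lemma factorial_le_mul_orbitRatio {K n i : ℕ} (h : i < K) (hn : (i + 2)! ≤ n) :
    (i ! : ℚ) ≤ n * orbitRatio K i := by
  have hn' : (i + 2) * i ! ≤ n :=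
    calc (i + 2) * i ! ≤ (i + 2) * (i + 1)! := Nat.mul_le_mul_left _ (Nat.factorial_le (by omega))
      _ = (i + 2)! := (Nat.factorial_succ (i + 1)).symm
      _ ≤ n := hn
  have hn'' : ((i + 2) * i ! : ℚ) ≤ n := by exact_mod_cast hn'
  refine le_of_mul_le_mul_left ?_ (by positivity : (0 : ℚ) < i + 2)
  nlinarith [mul_le_mul_of_nonneg_left (one_le_add_two_mul_orbitRatio h) n.cast_nonneg]

lemma div_eq_of_abs_sub_lt {K n a j : ℕ} (hjK : j + 3 ≤ K) (hn : (j + 4)! ≤ n)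
    (ha : |(a : ℚ) - n * orbitRatio K j| < j !) : n / a = j + 1 := by
  set r := orbitRatio K
  have hr₀ : (j + 1) * r j = 1 - r (j + 1) := add_one_mul_orbitRatio (by omega)
  have hr₁ : (j + 2) * r (j + 1) = 1 - r (j + 2) := by
    have := add_one_mul_orbitRatio (by omega : j + 1 < K); push_cast at this; linarith
  have hx : (j + 1) * (j ! : ℚ) ≤ n * r (j + 1) := by
    have := factorial_le_mul_orbitRatio (by omega : j + 1 < K)
      ((Nat.factorial_le (by omega)).trans hn)
    push_cast [Nat.factorial_succ] at this; exact this
  have hy : (j + 2) * (j + 1) * (j ! : ℚ) ≤ n * r (j + 2) := by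
    have := factorial_le_mul_orbitRatio (by omega : j + 2 < K) hn
    push_cast [Nat.factorial_succ] at this; linarith
  rw [abs_lt] at ha
  apply Nat.div_eq_of_lt_le
  · have h := mul_lt_mul_of_pos_left ha.2 (by positivity : (0 : ℚ) < j + 1)
    have : ((j + 1) * a : ℚ) ≤ n := by linear_combination h + n * hr₀ + hx
    exact_mod_cast this
  · have h := mul_lt_mul_of_pos_left ha.1 (by positivity : (0 : ℚ) < (j + 1) * (j + 2))
    have e : (j + 1) * (j + 2) * (n * r j) = (j + 1) * n + n * r (j + 2) := by
      linear_combination (n * (j + 2)) * hr₀ - n * hr₁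
    have : (j + 1) * n < (j + 1) * ((j + 2) * a : ℚ) := by linarith
    have : (n : ℚ) < (j + 1 + 1) * a := by nlinarith
    exact_mod_cast this

lemma abs_mod_sub_lt {K n a j : ℕ} (hjK : j + 3 ≤ K) (hn : (j + 4)! ≤ n)
    (ha : |(a : ℚ) - n * orbitRatio K j| < j !) :
    |((n % a : ℕ) : ℚ) - n * orbitRatio K (j + 1)| < (j + 1)! := by
  have hmod : n % a + (j + 1) * a = n := by
    rw [← div_eq_of_abs_sub_lt hjK hn ha, Nat.mul_comm]; exact Nat.mod_add_div n a
  have hrec := add_one_mul_orbitRatio (by omega : j < K)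
  have hQ : ((n % a : ℕ) : ℚ) = n - (j + 1) * a := by
    have := congrArg (Nat.cast (R := ℚ)) hmod
    push_cast at this
    linarith
  have : ((n % a : ℕ) : ℚ) - n * orbitRatio K (j + 1) =
      -((j + 1) * (a - n * orbitRatio K j)) := by
    rw [hQ]; linear_combination -(n : ℚ) * hrec
  rw [this, abs_neg, abs_mul, Nat.factorial_succ]
  push_cast
  rw [abs_of_pos (by positivity)]
  gcongr

lemma abs_pseq_sub_lt {K n j : ℕ} (hjK : j + 3 ≤ K) (hn : (K + 1)! ≤ n) :
    |(pseq n ⌈n * orbitRatio K 0⌉₊ j : ℚ) - n * orbitRatio K j| < j ! := by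
  induction j with
  | zero =>
    have h₀ : (0 : ℚ) ≤ n * orbitRatio K 0 :=
      mul_nonneg n.cast_nonneg (orbitRatio_mem_Icc K 0).1
    rw [pseq, Nat.factorial_zero, Nat.cast_one, abs_lt]
    exact ⟨by linarith [Nat.le_ceil (n * orbitRatio K 0)],
      by linarith [Nat.ceil_lt_add_one h₀]⟩
  | succ j ih =>
    exact abs_mod_sub_lt (by omega) ((Nat.factorial_le (by omega)).trans hn) (ih (by omega))

lemma le_Pmax {K n : ℕ} (hK : 3 ≤ K) (hn : (K + 1)! ≤ n) : K - 2 ≤ Pmax n := by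
  set b := ⌈n * orbitRatio K 0⌉₊
  have hb : ∀ j < K - 2, pseq n b j ≠ 0 := fun j hj h0 => by
    have := div_eq_of_abs_sub_lt (by omega) ((Nat.factorial_le (by omega)).trans hn)
      (abs_pseq_sub_lt (by omega : j + 3 ≤ K) hn)
    rw [h0, Nat.div_zero] at this
    omega
  have hbn : b ≤ n := Nat.ceil_le.2 <| by
    simpa using mul_le_mul_of_nonneg_left (orbitRatio_mem_Icc K 0).2 n.cast_nonneg
  calc K - 2 ≤ Psteps n b := le_Psteps hb
    _ ≤ Pmax n := Finset.le_sup (Finset.mem_Icc.2 ⟨Nat.pos_of_ne_zero (hb 0 (by omega)), hbn⟩)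

lemma log_div_le_Pmax {n : ℕ} (hM : 1 ≤ log (log (n : ℝ)))
    (hLM : 12 * log (log (n : ℝ)) ≤ log n) :
    log n / (4 * log (log (n : ℝ))) ≤ Pmax n := by
  set L := log (n : ℝ)
  set M := log L
  have hL : 0 < L := by linarith
  have hn : (0 : ℝ) < n := Nat.cast_pos.2 <| Nat.pos_of_ne_zero fun h => by simp [L, h] at hL
  set K := ⌊L / (2 * M)⌋₊
  have hK : L / (2 * M) - 1 < K := by linarith [Nat.lt_floor_add_one (L / (2 * M))]
  have hKL : L / (2 * M) ≤ L / 2 := div_le_div_of_nonneg_left hL.le two_pos (by linarith)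
  have hfac : (K + 1)! ≤ n := by
    refine (Nat.factorial_le_pow (K + 1)).trans ?_
    have hlog : ((K + 1 : ℕ) : ℝ) * log ((K + 1 : ℕ) : ℝ) ≤ L :=
      calc ((K + 1 : ℕ) : ℝ) * log ((K + 1 : ℕ) : ℝ) ≤ (L / (2 * M) + 1) * M := by
            have : (K : ℝ) ≤ L / (2 * M) := Nat.floor_le (by positivity)
            push_cast
            exact mul_le_mul (by linarith) (log_le_log (by positivity) (by linarith))
              (log_nonneg (by linarith)) (by linarith)
        _ = L / 2 + M := by field_simp
        _ ≤ L := by linarith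
    exact_mod_cast (pow_le_iff_le_log (by positivity) hn).2 hlog
  have h6 : 6 ≤ L / (2 * M) := by rw [le_div_iff₀ (by positivity)]; linarith
  have hK3 : 3 ≤ K := by exact_mod_cast (show (3 : ℝ) ≤ K by linarith)
  have hP : (K : ℝ) - 2 ≤ Pmax n := by
    have := le_Pmax hK3 hfac
    rw [← Nat.cast_ofNat, ← Nat.cast_sub (by omega)]
    exact_mod_cast this
  have : L / (4 * M) = L / (2 * M) / 2 := by field_simp; ring
  linarith

lemma eventually_log_log_le :
    ∀ᶠ n : ℕ in atTop, 1 ≤ log (log (n : ℝ)) ∧ 12 * log (log (n : ℝ)) ≤ log n := by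
  have hL : Tendsto (fun n : ℕ => log (n : ℝ)) atTop atTop :=
    tendsto_log_atTop.comp tendsto_natCast_atTop_atTop
  refine hL.eventually (p := fun L => 1 ≤ log L ∧ 12 * log L ≤ L) ?_
  filter_upwards [tendsto_log_atTop.eventually_ge_atTop 1,
    isLittleO_log_id_atTop.bound (by norm_num : (0 : ℝ) < 1 / 12),
    eventually_ge_atTop 0] with x h₁ h₂ h₃
  rw [norm_of_nonneg (by linarith), id, norm_of_nonneg h₃] at h₂
  exact ⟨h₁, by linarith⟩

theorem stmt_8 : ∃ c > (0:ℝ), ∃ N : ℕ, ∀ n : ℕ, N ≤ n →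
    c * Real.log n / Real.log (Real.log n) ≤ (Pmax n : ℝ) := by
  obtain ⟨N, hN⟩ := eventually_atTop.1 eventually_log_log_le
  refine ⟨1 / 4, by norm_num, N, fun n hn => ?_⟩
  obtain ⟨hM, hLM⟩ := hN n hn
  calc 1 / 4 * log n / log (log (n : ℝ)) = log n / (4 * log (log (n : ℝ))) := by ring
    _ ≤ Pmax n := log_div_le_Pmax hM hLM
end

section
/- Let n be large, a_0 = ⌊(1 − 1/e)n⌋, and a_{j+1} = n mod a_j. Define b_0 = (1 − 1/e)n and b_k = (-1)^k k! (Σ_{j=0}^k (-1)^j/j! − 1/e)·n for k ≥ 1. Then for every k ≤ c·(log n)/(log log n) (for a suitable absolute constant c > 0), one has |a_k − b_k| ≤ k! and a_{k+1} = n − (k+1)·a_k; in particular a_k > n/(k+2) > 0. -/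
noncomputable def bseq (n : ℕ) : ℕ → ℝ
  | 0 => (1 - Real.exp (-1)) * n
  | k + 1 => (-1 : ℝ) ^ (k + 1) * (Nat.factorial (k + 1)) *
      ((∑ j ∈ Finset.range (k + 2), (-1 : ℝ) ^ j / (Nat.factorial j)) - Real.exp (-1)) * n

/-!
Write `b_k = β_k n` (`β_k = bcoeff k`). The coefficients obey `β_{k+1} = 1 - (k+1) β_k`; unrolling this three times
and bounding `β_{k+3}` by the Taylor remainder of `exp` places `β_k` strictly between `1/(k+2)` and
`1/(k+1)`, with margin `δ_k = 1/(2(k+1)(k+2)(k+3))`. So if `|a_k - β_k n| ≤ k!` and `k! < δ_k n`,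
i.e. `2 (k+3)! < n`, then `n/(k+2) < a_k < n/(k+1)`: the quotient of `n` by `a_k` is `k+1`, and
`a_{k+1} = n - (k+1) a_k` inherits the error `(k+1) k!` through the recurrence of `β`.
Finally `log (2 (k+3)!) ≤ log 2 + (k+3) log (k+3) < log n` once `k ≤ log n / (2 log log n)`
and `n` is large.
-/

open Real Filter
open scoped Nat

noncomputable def bcoeff (k : ℕ) : ℝ :=
  (-1) ^ k * k ! * ((∑ j ∈ Finset.range (k + 1), (-1 : ℝ) ^ j / j !) - exp (-1))

lemma bseq_eq_bcoeff_mul (n k : ℕ) : bseq n k = bcoeff k * n := by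
  cases k <;> simp [bseq, bcoeff]

lemma bcoeff_zero : bcoeff 0 = 1 - exp (-1) := by
  simp [bcoeff]

lemma bcoeff_succ (k : ℕ) : bcoeff (k + 1) = 1 - (k + 1) * bcoeff k := by
  have hsq : ((-1 : ℝ) ^ k) ^ 2 = 1 := by rw [← pow_mul, mul_comm, pow_mul, neg_one_sq, one_pow]
  simp only [bcoeff, Finset.sum_range_succ _ (k + 1), Nat.factorial_succ, pow_succ]
  push_cast
  field_simp
  linear_combination hsq

lemma abs_bcoeff_le (k : ℕ) : |bcoeff k| ≤ (k + 2) / (k + 1) ^ 2 := by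
  have h := Real.exp_bound (x := -1) (by norm_num) (n := k + 1) k.succ_pos
  simp only [abs_neg, abs_one, one_pow, one_mul] at h
  rw [bcoeff, abs_mul, abs_mul, abs_pow, abs_neg, abs_one, one_pow, one_mul, Nat.abs_cast,
    abs_sub_comm]
  calc (k ! : ℝ) * |exp (-1) - ∑ j ∈ Finset.range (k + 1), (-1 : ℝ) ^ j / j !|
      ≤ k ! * ((k + 1).succ / ((k + 1)! * (k + 1 : ℕ))) := by gcongr
    _ = (k + 2) / (k + 1) ^ 2 := by
      push_cast [Nat.factorial_succ]
      field_simp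
      ring

lemma bcoeff_eq_unroll (m : ℕ) :
    bcoeff m = 1 / (m + 2) + (1 - bcoeff (m + 3)) / ((m + 1) * (m + 2) * (m + 3)) := by
  rw [bcoeff_succ (m + 2), bcoeff_succ (m + 1), bcoeff_succ m]
  push_cast
  field_simp
  ring

lemma bcoeff_bounds (m : ℕ) :
    1 / (m + 2) + 1 / (2 * ((m + 1) * (m + 2) * (m + 3))) ≤ bcoeff m ∧
      bcoeff m ≤ 1 / (m + 1) - 1 / (2 * ((m + 1) * (m + 2) * (m + 3))) := by
  have hrem : |bcoeff (m + 3)| ≤ 1 / 2 := by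
    refine (abs_bcoeff_le _).trans ?_
    rw [div_le_div_iff₀ (by positivity) (by norm_num)]
    push_cast
    nlinarith
  obtain ⟨hlo, hhi⟩ := abs_le.mp hrem
  set P : ℝ := (m + 1) * (m + 2) * (m + 3) with hP
  have hPpos : 0 < P := by positivity
  have hgap : 1 / (m + 1) - 1 / (m + 2) = (m + 3) / P := by
    rw [hP]
    field_simp
    ring
  rw [bcoeff_eq_unroll, ← div_div]
  constructor
  · gcongr
    linarith
  · have h₁ : (1 - bcoeff (m + 3)) / P ≤ (3 / 2) / P := by gcongr; linarith
    have h₂ : (3 / 2) / P + (1 / 2) / P ≤ (m + 3) / P := by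
      rw [← add_div]
      exact div_le_div_of_nonneg_right (by linarith [m.cast_nonneg (α := ℝ)]) hPpos.le
    linarith

lemma mul_lt_and_lt_mul_of_abs_sub_bcoeff_le {n m a : ℕ} (ha : |(a : ℝ) - bcoeff m * n| ≤ m !)
    (hn : 2 * (m + 3)! < n) : (m + 1) * a < n ∧ n < (m + 2) * a := by
  obtain ⟨hlo, hhi⟩ := bcoeff_bounds m
  set δ : ℝ := 1 / (2 * ((m + 1) * (m + 2) * (m + 3)))
  have hfac : (m ! : ℝ) < n * δ := by
    have hn' : (2 * (m + 3)! : ℝ) < n := by exact_mod_cast hn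
    rw [mul_one_div, lt_div_iff₀ (by positivity)]
    push_cast [Nat.factorial_succ] at hn'
    linarith
  obtain ⟨ha₁, ha₂⟩ := abs_le.mp ha
  have hn0 : (0 : ℝ) ≤ n := n.cast_nonneg
  constructor
  · have hlt : (a : ℝ) < n / (m + 1) :=
      calc (a : ℝ) ≤ bcoeff m * n + m ! := by linarith
        _ < (1 / (m + 1) - δ) * n + n * δ := add_lt_add_of_le_of_lt (by gcongr) hfac
        _ = n / (m + 1) := by ring
    exact_mod_cast (lt_div_iff₀' (by positivity)).mp hlt
  · have hlt : (n : ℝ) / (m + 2) < a :=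
      calc (n : ℝ) / (m + 2) = (1 / (m + 2) + δ) * n - n * δ := by ring
        _ < bcoeff m * n - m ! := by linarith [mul_le_mul_of_nonneg_right hlo hn0]
        _ ≤ a := by linarith
    exact_mod_cast (div_lt_iff₀' (by positivity)).mp hlt

lemma pseq_succ_eq_sub {n a k : ℕ} (h₁ : (k + 1) * pseq n a k ≤ n)
    (h₂ : n < (k + 2) * pseq n a k) : pseq n a (k + 1) = n - (k + 1) * pseq n a k := by
  rw [pseq, Nat.mod_eq_sub, Nat.div_eq_of_lt_le h₁ h₂, mul_comm]

lemma abs_sub_bcoeff_succ_le {n a k : ℕ} (ha : |(a : ℝ) - bcoeff k * n| ≤ k !)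
    (hle : (k + 1) * a ≤ n) : |((n - (k + 1) * a : ℕ) : ℝ) - bcoeff (k + 1) * n| ≤ (k + 1)! := by
  have h : ((n - (k + 1) * a : ℕ) : ℝ) - bcoeff (k + 1) * n = -((k + 1) * (a - bcoeff k * n)) := by
    rw [Nat.cast_sub hle, bcoeff_succ]
    push_cast
    ring
  rw [h, abs_neg, abs_mul, abs_of_pos (by positivity), Nat.factorial_succ]
  push_cast
  gcongr

lemma abs_pseq_sub_bcoeff_mul_le {n a : ℕ} (ha : |(a : ℝ) - bcoeff 0 * n| ≤ 1) :
    ∀ k, 2 * (k + 3)! < n → |(pseq n a k : ℝ) - bcoeff k * n| ≤ k !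
  | 0, _ => by simpa [pseq] using ha
  | k + 1, hn => by
    have hk : 2 * (k + 3)! < n := lt_of_le_of_lt (by gcongr; omega) hn
    have ih := abs_pseq_sub_bcoeff_mul_le ha k hk
    obtain ⟨h₁, h₂⟩ := mul_lt_and_lt_mul_of_abs_sub_bcoeff_le ih hk
    rw [pseq_succ_eq_sub h₁.le h₂]
    exact abs_sub_bcoeff_succ_le ih h₁.le

lemma abs_floor_sub_bcoeff_zero_mul_le (n : ℕ) :
    |(⌊(1 - exp (-1)) * n⌋₊ : ℝ) - bcoeff 0 * n| ≤ 1 := by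
  have h : 0 ≤ (1 - exp (-1)) * n :=
    mul_nonneg (sub_nonneg.mpr (exp_le_one_iff.mpr (by norm_num))) n.cast_nonneg
  rw [bcoeff_zero, abs_le]
  constructor <;> linarith [Nat.floor_le h, Nat.lt_floor_add_one ((1 - exp (-1)) * n)]

lemma two_mul_factorial_lt {m n : ℕ} (h : log 2 + m * log m < log n) : 2 * m ! < n := by
  have hpos : (0 : ℝ) < 2 * m ! := by positivity
  have hlog : log (2 * m !) ≤ log 2 + m * log m := by
    rw [log_mul two_ne_zero (by positivity), ← log_pow]
    gcongr
    exact_mod_cast Nat.factorial_le_pow m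
  have hn : (0 : ℝ) < n := by
    have hm : 0 ≤ (m : ℝ) * log m := mul_nonneg m.cast_nonneg (log_natCast_nonneg m)
    have hlogn : 0 < log (n : ℝ) := by linarith [log_pos one_lt_two]
    exact one_pos.trans ((log_pos_iff n.cast_nonneg).mp hlogn)
  exact_mod_cast (log_lt_log_iff hpos hn).mp (hlog.trans_lt h)

lemma eventually_log_two_add_mul_log_lt :
    ∀ᶠ L in atTop, ∀ k : ℕ, (k : ℝ) ≤ 1 / 2 * L / log L → log 2 + (k + 3) * log (k + 3) < L := by
  filter_upwards [isLittleO_log_id_atTop.bound (by norm_num : (0 : ℝ) < 1 / 8),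
    eventually_ge_atTop (exp 1), eventually_ge_atTop 8] with L hsmall he h8 k hk
  have hL : 0 < L := by linarith
  have hLL : 1 ≤ log L := by rwa [le_log_iff_exp_le hL]
  have hsmall' : log L ≤ L / 8 := by
    rw [norm_eq_abs, id, norm_eq_abs, abs_of_pos hL] at hsmall
    linarith [le_abs_self (log L)]
  have hkLL : k * log L ≤ L / 2 :=
    calc k * log L ≤ 1 / 2 * L / log L * log L := by gcongr
      _ = L / 2 := by field_simp
  have hk3 : (k : ℝ) + 3 ≤ L := by nlinarith
  have hlog : log (k + 3) ≤ log L := log_le_log (by positivity) hk3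
  calc log 2 + (k + 3) * log (k + 3) ≤ log 2 + (k + 3) * log L := by gcongr
    _ < L := by nlinarith [log_two_lt_d9]

theorem stmt_9 : ∃ c > (0:ℝ), ∃ N : ℕ, ∀ n : ℕ, N ≤ n →
    ∀ k : ℕ, (k : ℝ) ≤ c * Real.log n / Real.log (Real.log n) →
    let a := Nat.floor ((1 - Real.exp (-1)) * n)
    |(pseq n a k : ℝ) - bseq n k| ≤ (Nat.factorial k) ∧
    pseq n a (k + 1) = n - (k + 1) * pseq n a k ∧
    (n : ℝ) / (k + 2) < (pseq n a k : ℝ) ∧ (0:ℝ) < (n : ℝ) / (k + 2) := by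
  refine ⟨1 / 2, by norm_num, ?_⟩
  obtain ⟨N, hN⟩ := eventually_atTop.mp <|
    (tendsto_log_atTop.comp tendsto_natCast_atTop_atTop).eventually
      eventually_log_two_add_mul_log_lt
  refine ⟨N, fun n hn k hk => ?_⟩
  have hfac : 2 * (k + 3)! < n := two_mul_factorial_lt (by exact_mod_cast hN n hn k hk)
  have hclose := abs_pseq_sub_bcoeff_mul_le (abs_floor_sub_bcoeff_zero_mul_le n) k hfac
  obtain ⟨h₁, h₂⟩ := mul_lt_and_lt_mul_of_abs_sub_bcoeff_le hclose hfac
  have hn0 : (0 : ℝ) < n := by exact_mod_cast (Nat.zero_le _).trans_lt hfac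
  refine ⟨by rwa [bseq_eq_bcoeff_mul], pseq_succ_eq_sub h₁.le h₂, ?_, by positivity⟩
  rw [div_lt_iff₀' (by positivity)]
  exact_mod_cast h₂
end

section
/- For every ε > 0 there is a constant C(ε) such that for all positive integers n and all A with 1 ≤ A ≤ n, the number of indices j with A < a_j ≤ 2A in the iteration a_{j+1} = n mod a_j (for any starting value a_0 ≤ n) is at most C(ε)·A^{1/2}·n^{ε}. -/
/-!
While `a_j > 0` the remainders strictly decrease, and the gap `g_j = a_j - a_{j+1}` satisfies
`a_j ∣ n + g_j`. Hence the terms `a_j ≤ 2A` are distinct and, by telescoping, their gaps sum to at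
most `2A`: for any threshold `h > 0` at most `2A / h` of them have a gap larger than `h`, while for
each value `d ≤ h` at most `d(n + d) ≪ n^ε` of them have gap `d`, by the divisor bound.
Taking `h = A^{1/2} n^{-ε}` balances the two counts.
-/

open Real Finset

theorem Real.add_one_le_rpow_pow_of_two_le_rpow {x ε : ℝ} (hx : 0 ≤ x) (h : 2 ≤ x ^ ε) (e : ℕ) :
    (e + 1 : ℝ) ≤ (x ^ e) ^ ε :=
  calc (e + 1 : ℝ) ≤ 2 ^ e := by exact_mod_cast Nat.lt_two_pow_self
    _ ≤ (x ^ ε) ^ e := pow_le_pow_left₀ zero_le_two h e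
    _ = (x ^ e) ^ ε := rpow_pow_comm hx ε e

theorem Real.add_one_le_mul_rpow_pow {x ε : ℝ} (hε : 0 < ε) (hx : 2 ≤ x) (e : ℕ) :
    (e + 1 : ℝ) ≤ (1 + (ε * log 2)⁻¹) * (x ^ e) ^ ε := by
  set c := ε * log 2
  have hc : 0 < c := mul_pos hε (log_pos one_lt_two)
  have hexp : 1 + e * c ≤ (x ^ e) ^ ε :=
    calc 1 + e * c ≤ 1 + e * ε * log x := by
          rw [mul_assoc]
          gcongr
          exact mul_le_mul_of_nonneg_left (log_le_log two_pos hx) hε.le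
      _ ≤ exp (e * ε * log x) := by linarith [add_one_le_exp (e * ε * log x)]
      _ = (x ^ e) ^ ε := by
          rw [← rpow_natCast, ← rpow_mul (by linarith), rpow_def_of_pos (by linarith)]
          ring_nf
  have hprod : (1 + c⁻¹) * (1 + e * c) = e + 1 + (e * c + c⁻¹) := by
    field_simp; ring
  calc (e + 1 : ℝ) ≤ (1 + c⁻¹) * (1 + e * c) := by
        rw [hprod]; exact le_add_of_nonneg_right (by positivity)
    _ ≤ (1 + c⁻¹) * (x ^ e) ^ ε := by gcongr

theorem Nat.exists_card_divisors_le_mul_rpow {ε : ℝ} (hε : 0 < ε) :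
    ∃ C > 0, ∀ m : ℕ, m ≠ 0 → (#m.divisors : ℝ) ≤ C * (m : ℝ) ^ ε := by
  set K : ℝ := 1 + (ε * Real.log 2)⁻¹
  have hK : 1 ≤ K :=
    le_add_of_nonneg_right (inv_nonneg.2 (mul_pos hε (Real.log_pos one_lt_two)).le)
  set B : ℕ := ⌈(2 : ℝ) ^ ε⁻¹⌉₊
  refine ⟨K ^ B, by positivity, fun m hm => ?_⟩
  have hprime : ∀ p ∈ m.primeFactors, (m.factorization p + 1 : ℝ) ≤
      (if p < B then K else 1) * ((p : ℝ) ^ m.factorization p) ^ ε := by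
    intro p hp
    have hp2 : (2 : ℝ) ≤ p := by exact_mod_cast (Nat.prime_of_mem_primeFactors hp).two_le
    split_ifs with hpB
    · exact add_one_le_mul_rpow_pow hε hp2 _
    · rw [one_mul]
      refine add_one_le_rpow_pow_of_two_le_rpow (by positivity) ?_ _
      calc (2 : ℝ) = ((2 : ℝ) ^ ε⁻¹) ^ ε := by
            rw [← rpow_mul zero_le_two, inv_mul_cancel₀ hε.ne', rpow_one]
        _ ≤ (p : ℝ) ^ ε :=
            rpow_le_rpow (by positivity)
              ((Nat.le_ceil _).trans (by exact_mod_cast not_lt.1 hpB)) hε.le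
  have hsmall : ∏ p ∈ m.primeFactors, (if p < B then K else 1) ≤ K ^ B := by
    rw [prod_ite, prod_const, prod_const, one_pow, mul_one]
    exact pow_le_pow_right₀ hK
      ((card_le_card fun p hp => mem_range.2 (mem_filter.1 hp).2).trans (card_range B).le)
  have hm_eq : ∏ p ∈ m.primeFactors, ((p : ℝ) ^ m.factorization p) ^ ε = (m : ℝ) ^ ε := by
    rw [finsetProd_rpow _ _ fun _ _ => by positivity]
    congr 1
    exact_mod_cast Nat.prod_factorization_pow_eq_self hm
  calc (#m.divisors : ℝ) = ∏ p ∈ m.primeFactors, (m.factorization p + 1 : ℝ) := by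
        rw [Nat.card_divisors hm]; push_cast; rfl
    _ ≤ ∏ p ∈ m.primeFactors, ((if p < B then K else 1) * ((p : ℝ) ^ m.factorization p) ^ ε) :=
        prod_le_prod (fun _ _ => by positivity) hprime
    _ ≤ K ^ B * (m : ℝ) ^ ε := by
        rw [prod_mul_distrib, hm_eq]; gcongr

theorem Finset.sum_Ico_tsub_succ_add {f : ℕ → ℕ} {j₀ m : ℕ} (hjm : j₀ ≤ m)
    (hf : ∀ j ∈ Ico j₀ m, f (j + 1) ≤ f j) :
    ∑ j ∈ Ico j₀ m, (f j - f (j + 1)) + f m = f j₀ := by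
  induction m, hjm using Nat.le_induction with
  | base => simp
  | succ m hjm ih =>
    have hm := hf m (mem_Ico.2 ⟨hjm, m.lt_succ_self⟩)
    have := ih fun j hj =>
      hf j (mem_Ico.2 ⟨(mem_Ico.1 hj).1, (mem_Ico.1 hj).2.trans m.lt_succ_self⟩)
    rw [sum_Ico_succ_top hjm]
    omega

theorem Finset.sum_tsub_succ_le {f : ℕ → ℕ} {s : Finset ℕ} {B : ℕ}
    (hf : ∀ j ∈ s, ∀ i ≤ j, f (i + 1) ≤ f i) (hB : ∀ j ∈ s, f j ≤ B) :
    ∑ j ∈ s, (f j - f (j + 1)) ≤ B := by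
  rcases s.eq_empty_or_nonempty with rfl | hs
  · simp
  have hsub : s ⊆ Ico (s.min' hs) (s.max' hs + 1) := fun j hj =>
    mem_Ico.2 ⟨s.min'_le j hj, Nat.lt_succ_of_le (s.le_max' j hj)⟩
  have htel := sum_Ico_tsub_succ_add (f := f) (m := s.max' hs + 1)
    ((s.min'_le _ (s.max'_mem hs)).trans (Nat.le_succ _))
    fun j hj => hf _ (s.max'_mem hs) j (Nat.le_of_lt_succ (mem_Ico.1 hj).2)
  calc ∑ j ∈ s, (f j - f (j + 1)) ≤ ∑ j ∈ Ico (s.min' hs) (s.max' hs + 1), (f j - f (j + 1)) :=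
        sum_le_sum_of_subset hsub
    _ ≤ f (s.min' hs) := by omega
    _ ≤ B := hB _ (s.min'_mem hs)

theorem Finset.card_le_div_add_mul_of_sum_le {ι : Type*} (s : Finset ι) (g : ι → ℕ) {A D h : ℝ}
    (hh : 0 < h) (hg : ∀ j ∈ s, 1 ≤ g j) (hsum : ∑ j ∈ s, (g j : ℝ) ≤ A)
    (hfib : ∀ d, (#{j ∈ s | g j = d} : ℝ) ≤ D) :
    (#s : ℝ) ≤ A / h + h * D := by
  have hD : 0 ≤ D := (Nat.cast_nonneg _).trans (hfib 0)
  have hlarge : #{j ∈ s | h < g j} * h ≤ A :=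
    calc #{j ∈ s | h < g j} * h ≤ ∑ j ∈ s with h < g j, (g j : ℝ) := by
          rw [← nsmul_eq_mul]; exact card_nsmul_le_sum _ _ _ fun j hj => (mem_filter.1 hj).2.le
      _ ≤ ∑ j ∈ s, (g j : ℝ) := sum_le_sum_of_subset_of_nonneg (filter_subset _ _)
          fun _ _ _ => Nat.cast_nonneg _
      _ ≤ A := hsum
  have hsmall : (#{j ∈ s | ¬h < g j} : ℝ) ≤ h * D := by
    have hmaps : Set.MapsTo g (s.filter fun j => ¬h < g j) (Icc 1 ⌊h⌋₊) := fun j hj => by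
      obtain ⟨hjs, hjh⟩ := mem_filter.1 (mem_coe.1 hj)
      exact mem_Icc.2 ⟨hg j hjs, Nat.le_floor (not_lt.1 hjh)⟩
    calc (#{j ∈ s | ¬h < g j} : ℝ)
        = ∑ d ∈ Icc 1 ⌊h⌋₊, (#{j ∈ {j ∈ s | ¬h < g j} | g j = d} : ℝ) := by
          exact_mod_cast card_eq_sum_card_fiberwise hmaps
      _ ≤ ∑ d ∈ Icc 1 ⌊h⌋₊, D := sum_le_sum fun d _ =>
          (Nat.cast_le.2 (card_le_card (filter_subset_filter _ (filter_subset _ _)))).trans (hfib d)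
      _ ≤ h * D := by
          rw [sum_const, Nat.card_Icc, add_tsub_cancel_right, nsmul_eq_mul]
          exact mul_le_mul_of_nonneg_right (Nat.floor_le hh.le) hD
  rw [← card_filter_add_card_filter_not (fun j => h < g j), Nat.cast_add]
  have : (#{j ∈ s | h < g j} : ℝ) ≤ A / h := (le_div_iff₀ hh).2 hlarge
  linarith

section RemainderSequence

variable {n a : ℕ}

theorem pseq_le (h : a ≤ n) : ∀ j, pseq n a j ≤ n
  | 0 => h
  | _ + 1 => Nat.mod_le _ _

theorem pseq_succ_lt {j : ℕ} (h : 0 < pseq n a j) : pseq n a (j + 1) < pseq n a j :=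
  Nat.mod_lt _ h

theorem pseq_lt_pseq {j k : ℕ} (hjk : j < k) (hpos : ∀ i < k, 0 < pseq n a i) :
    pseq n a k < pseq n a j := by
  induction k, hjk using Nat.le_induction with
  | base => exact pseq_succ_lt (hpos j j.lt_succ_self)
  | succ k hjk ih =>
    exact (pseq_succ_lt (hpos k k.lt_succ_self)).trans
      (ih fun i hi => hpos i (hi.trans k.lt_succ_self))

theorem pseq_strictAntiOn : StrictAntiOn (pseq n a) {j | ∀ i ≤ j, 0 < pseq n a i} :=
  fun _ _ _ hk hjk => pseq_lt_pseq hjk fun i hi => hk i hi.le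

theorem Nat.dvd_add_sub_mod {m : ℕ} (hm : m ≠ 0) (n : ℕ) : m ∣ n + (m - n % m) := by
  refine ⟨n / m + 1, ?_⟩
  rw [mul_add, mul_one]
  have := Nat.div_add_mod n m
  have := Nat.mod_lt n (Nat.pos_of_ne_zero hm)
  generalize m * (n / m) = q at *
  omega

theorem pseq_dvd_add_sub {j : ℕ} (h : 0 < pseq n a j) :
    pseq n a j ∣ n + (pseq n a j - pseq n a (j + 1)) :=
  Nat.dvd_add_sub_mod h.ne' n

theorem card_filter_pseq_sub_eq_le {s : Finset ℕ} (hs : ∀ j ∈ s, ∀ i ≤ j, 0 < pseq n a i)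
    {d : ℕ} (hnd : n + d ≠ 0) :
    #{j ∈ s | pseq n a j - pseq n a (j + 1) = d} ≤ #(n + d).divisors := by
  refine card_le_card_of_injOn (pseq n a) (fun j hj => ?_)
    (pseq_strictAntiOn.injOn.mono fun j hj => hs j (mem_filter.1 hj).1)
  obtain ⟨hjs, rfl⟩ := mem_filter.1 hj
  exact Nat.mem_divisors.2 ⟨pseq_dvd_add_sub (hs j hjs j le_rfl), hnd⟩

theorem card_filter_pseq_sub_eq_le_mul_rpow {ε C : ℝ} (hε : 0 ≤ ε) (hC : 0 ≤ C)
    (hdiv : ∀ m : ℕ, m ≠ 0 → (#m.divisors : ℝ) ≤ C * (m : ℝ) ^ ε)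
    (hn : 0 < n) (han : a ≤ n) {s : Finset ℕ} (hs : ∀ j ∈ s, ∀ i ≤ j, 0 < pseq n a i) (d : ℕ) :
    (#{j ∈ s | pseq n a j - pseq n a (j + 1) = d} : ℝ) ≤ C * (2 * n) ^ ε := by
  rcases (s.filter fun j => pseq n a j - pseq n a (j + 1) = d).eq_empty_or_nonempty
    with he | ⟨j, hj⟩
  · rw [he, card_empty, Nat.cast_zero]
    positivity
  obtain ⟨-, rfl⟩ := mem_filter.1 hj
  have hdn : pseq n a j - pseq n a (j + 1) ≤ n := (Nat.sub_le _ _).trans (pseq_le han j)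
  calc (#{i ∈ s | pseq n a i - pseq n a (i + 1) = pseq n a j - pseq n a (j + 1)} : ℝ)
      ≤ #(n + (pseq n a j - pseq n a (j + 1))).divisors := by
        exact_mod_cast card_filter_pseq_sub_eq_le hs (by omega)
    _ ≤ C * ((n + (pseq n a j - pseq n a (j + 1)) : ℕ) : ℝ) ^ ε := hdiv _ (by omega)
    _ ≤ C * (2 * n) ^ ε := by
        gcongr
        exact_mod_cast (by omega : n + (pseq n a j - pseq n a (j + 1)) ≤ 2 * n)

theorem card_le_of_pseq_le_two_mul {ε C A : ℝ} (hε : 0 ≤ ε) (hC : 0 ≤ C)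
    (hdiv : ∀ m : ℕ, m ≠ 0 → (#m.divisors : ℝ) ≤ C * (m : ℝ) ^ ε)
    (hn : 0 < n) (hA : 0 < A) (han : a ≤ n) {s : Finset ℕ}
    (hpos : ∀ j ∈ s, ∀ i ≤ j, 0 < pseq n a i) (hle : ∀ j ∈ s, (pseq n a j : ℝ) ≤ 2 * A) :
    (#s : ℝ) ≤ (2 + C * 2 ^ ε) * A ^ ((1 : ℝ) / 2) * (n : ℝ) ^ ε := by
  set g : ℕ → ℕ := fun j => pseq n a j - pseq n a (j + 1)
  set r := A ^ ((1 : ℝ) / 2)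
  have hr : r * r = A := by rw [← rpow_add hA]; norm_num
  have hg : ∀ j ∈ s, 1 ≤ g j := fun j hj => Nat.sub_pos_of_lt (pseq_succ_lt (hpos j hj j le_rfl))
  have hsum : ∑ j ∈ s, (g j : ℝ) ≤ 2 * A := by
    have := sum_tsub_succ_le (B := ⌊2 * A⌋₊) (fun j hj i hi => (pseq_succ_lt (hpos j hj i hi)).le)
      fun j hj => Nat.le_floor (hle j hj)
    calc ∑ j ∈ s, (g j : ℝ) = ((∑ j ∈ s, g j : ℕ) : ℝ) := by push_cast; rfl
      _ ≤ ⌊2 * A⌋₊ := by exact_mod_cast this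
      _ ≤ 2 * A := Nat.floor_le (by positivity)
  have hh : 0 < r / n ^ ε := by positivity
  have hCr : 0 ≤ C * 2 ^ ε * r := by positivity
  calc (#s : ℝ) ≤ 2 * A / (r / n ^ ε) + r / n ^ ε * (C * (2 * n) ^ ε) :=
        card_le_div_add_mul_of_sum_le s g hh hg hsum
          (card_filter_pseq_sub_eq_le_mul_rpow hε hC hdiv hn han hpos)
    _ = 2 * r * n ^ ε + C * 2 ^ ε * r := by
        rw [mul_rpow zero_le_two (Nat.cast_nonneg n), ← hr]; field_simp
    _ ≤ 2 * r * n ^ ε + C * 2 ^ ε * r * n ^ ε := by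
        nlinarith [one_le_rpow (by exact_mod_cast hn : (1 : ℝ) ≤ n) hε]
    _ = (2 + C * 2 ^ ε) * r * n ^ ε := by ring

end RemainderSequence

open Classical in
theorem stmt_11 : ∀ ε > (0:ℝ), ∃ C > (0:ℝ), ∀ n : ℕ, 0 < n → ∀ A : ℝ, 1 ≤ A → A ≤ n →
    ∀ a : ℕ, 0 < a → a ≤ n →
    (((Finset.range (n + 1)).filter (fun j =>
        (∀ i ≤ j, 0 < pseq n a i) ∧ A < (pseq n a j : ℝ) ∧ (pseq n a j : ℝ) ≤ 2 * A)).card : ℝ)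
      ≤ C * A ^ ((1:ℝ)/2) * (n : ℝ) ^ ε := by
  intro ε hε
  obtain ⟨C, hC, hdiv⟩ := Nat.exists_card_divisors_le_mul_rpow hε
  refine ⟨2 + C * 2 ^ ε, by positivity, fun n hn A hA _ a _ han => ?_⟩
  exact card_le_of_pseq_le_two_mul hε.le hC.le hdiv hn (zero_lt_one.trans_le hA) han
    (fun j hj => (mem_filter.1 hj).2.1) fun j hj => (mem_filter.1 hj).2.2.2
end
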